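/- Let Φ denote the standard normal CDF, m ≥ 1, β ∈ (0, 2), and y ∈ ℝ^m. Let |y|_(r) denote the r-th largest value among |y_1|, ..., |y_m|, let P_i = 2(1 − Φ(|y_i|)), and let P_(1) ≤ ... ≤ P_(m) be the ordered values of P_1, ..., P_m. Then for every r ∈ {1,...,m}: Φ^{-1}(1 − rβ/(2m)) ≤ |y|_(r) if and only if P_(r) ≤ rβ/m; consequently max{r : Φ^{-1}(1 − rβ/(2m)) ≤ |y|_(r)} = max{r : P_(r) ≤ rβ/m} (both maxima existing for exactly the same y). In particular, with β = q the selective sign-determining procedure based on the symmetric interval selects exactly the hypotheses rejected by the level-q BH procedure, and with β = 2q the procedure based on the one-sided (or Pratt) interval selects exactly the hypotheses rejected by the level-2q BH procedure. -/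

import Mathlib

/-!
STATEMENT 16: For β ∈ (0, 2), y ∈ ℝ^m, |y|_(r) the r-th largest of |y_1|,...,|y_m|,
P_i = 2(1 − Φ(|y_i|)) and P_(1) ≤ ... ≤ P_(m) the ordered p-values: for every
r ∈ {1,...,m}, Φ⁻¹(1 − rβ/(2m)) ≤ |y|_(r) ⟺ P_(r) ≤ rβ/m; consequently
max{r : Φ⁻¹(1 − rβ/(2m)) ≤ |y|_(r)} = max{r : P_(r) ≤ rβ/m}, both maxima existing
for exactly the same y.
-/

open MeasureTheory ProbabilityTheory

/-- The standard normal cumulative distribution function `Φ`. -/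
noncomputable def Phi : ℝ → ℝ := fun x => ProbabilityTheory.cdf (gaussianReal 0 1) x

/-- The inverse `Φ⁻¹` of the standard normal CDF (junk values off `(0,1)`). -/
noncomputable def PhiInv : ℝ → ℝ := Function.invFun Phi

/-- The `r`-th largest entry of `v` (1-indexed; junk value `0` out of range). -/
noncomputable def kthLargest (m : ℕ) (v : Fin m → ℝ) (r : ℕ) : ℝ :=
  ((List.ofFn v).mergeSort (fun a b => decide (b ≤ a))).getD (r - 1) 0

/-- The `r`-th smallest entry of `v` (1-indexed; junk value `0` out of range). -/
noncomputable def kthSmallest (m : ℕ) (v : Fin m → ℝ) (r : ℕ) : ℝ :=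
  ((List.ofFn v).mergeSort (fun a b => decide (a ≤ b))).getD (r - 1) 0

/-!
Φ is continuous and strictly increasing with limits 0 and 1, so for `0 < t < 1` the threshold
test `Φ⁻¹(1 - t) ≤ a` is the p-value test `2(1 - Φ a) ≤ 2t`. The map `a ↦ 2(1 - Φ a)` is
antitone, so it sends the `r`-th largest `|yᵢ|` to the `r`-th smallest p-value; with
`t = rβ/(2m) ∈ (0, 1)` the two tests coincide for each `r`.
-/

theorem List.mergeSort_map_of_antitone {α β : Type*} [LinearOrder α] [LinearOrder β]
    {f : α → β} (hf : Antitone f) (l : List α) :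
    (l.map f).mergeSort (fun a b => decide (a ≤ b)) =
      (l.mergeSort (fun a b => decide (b ≤ a))).map f :=
  List.Perm.eq_of_pairwise' (List.pairwise_mergeSort' (· ≤ ·) _)
    ((List.pairwise_mergeSort' (· ≥ ·) l).map f fun _ _ hab => hf hab)
    ((List.mergeSort_perm _ _).trans ((List.mergeSort_perm l _).map f).symm)

theorem kthSmallest_comp_of_antitone {m r : ℕ} (hr : 1 ≤ r) (hrm : r ≤ m) {f : ℝ → ℝ}
    (hf : Antitone f) (v : Fin m → ℝ) :
    kthSmallest m (fun i => f (v i)) r = f (kthLargest m v r) := by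
  have hlen : r - 1 < ((List.ofFn v).mergeSort (fun a b => decide (b ≤ a))).length := by
    simp only [List.length_mergeSort, List.length_ofFn]
    omega
  rw [kthSmallest, kthLargest, show List.ofFn (fun i => f (v i)) = (List.ofFn v).map f from
    List.map_ofFn.symm, List.mergeSort_map_of_antitone hf,
    List.getD_eq_getElem _ _ (by simpa using hlen), List.getD_eq_getElem _ _ hlen,
    List.getElem_map]

theorem Phi_eq_integral (x : ℝ) : Phi x = ∫ t in Set.Iic x, gaussianPDFReal 0 1 t := by
  rw [Phi, cdf_eq_real, measureReal_def, gaussianReal_apply_eq_integral 0 one_ne_zero,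
    ENNReal.toReal_ofReal]
  exact setIntegral_nonneg measurableSet_Iic fun t _ => (gaussianPDFReal_pos 0 1 t one_ne_zero).le

theorem Phi_sub_Phi (a b : ℝ) : Phi b - Phi a = ∫ t in a..b, gaussianPDFReal 0 1 t := by
  rw [Phi_eq_integral, Phi_eq_integral, intervalIntegral.integral_Iic_sub_Iic
    (integrable_gaussianPDFReal 0 1).integrableOn (integrable_gaussianPDFReal 0 1).integrableOn]

theorem strictMono_Phi : StrictMono Phi := fun a b hab => by
  have hpos : 0 < Phi b - Phi a := by
    rw [Phi_sub_Phi]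
    exact intervalIntegral.intervalIntegral_pos_of_pos
      (integrable_gaussianPDFReal 0 1).intervalIntegrable
      (fun t => gaussianPDFReal_pos 0 1 t one_ne_zero) hab
  linarith

theorem continuous_Phi : Continuous Phi := by
  have h : Phi = fun x => (∫ t in (0 : ℝ)..x, gaussianPDFReal 0 1 t) + Phi 0 := by
    funext x
    linarith [Phi_sub_Phi 0 x]
  rw [h]
  exact (integrable_gaussianPDFReal 0 1).continuous_primitive 0 |>.add continuous_const

theorem Phi_PhiInv {u : ℝ} (h0 : 0 < u) (h1 : u < 1) : Phi (PhiInv u) = u := by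
  obtain ⟨a, ha⟩ : ∃ a, Phi a < u :=
    ((tendsto_cdf_atBot (μ := gaussianReal 0 1)).eventually_lt_const h0).exists
  obtain ⟨b, hb⟩ : ∃ b, u < Phi b :=
    ((tendsto_cdf_atTop (μ := gaussianReal 0 1)).eventually_const_lt h1).exists
  obtain ⟨x, hx⟩ := intermediate_value_univ a b continuous_Phi ⟨ha.le, hb.le⟩
  exact Function.invFun_eq ⟨x, hx⟩

theorem PhiInv_one_sub_le_iff {t : ℝ} (h0 : 0 < t) (h1 : t < 1) (a : ℝ) :
    PhiInv (1 - t) ≤ a ↔ 2 * (1 - Phi a) ≤ 2 * t := by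
  rw [← strictMono_Phi.le_iff_le, Phi_PhiInv (by linarith) (by linarith)]
  constructor <;> intro h <;> linarith

theorem antitone_two_mul_one_sub_Phi : Antitone fun a => 2 * (1 - Phi a) :=
  fun _ _ hab => by linarith [strictMono_Phi.monotone hab]

theorem PhiInv_le_kthLargest_iff_kthSmallest_le {m r : ℕ} (hr : 1 ≤ r) (hrm : r ≤ m) {β : ℝ}
    (hβ : 0 < β) (hβ' : β < 2) (v : Fin m → ℝ) :
    PhiInv (1 - (r : ℝ) * β / (2 * m)) ≤ kthLargest m v r ↔
      kthSmallest m (fun i => 2 * (1 - Phi (v i))) r ≤ (r : ℝ) * β / m := by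
  have hr0 : (0 : ℝ) < r := by exact_mod_cast hr
  have hrm' : (r : ℝ) ≤ m := by exact_mod_cast hrm
  have hm0 : (0 : ℝ) < m := hr0.trans_le hrm'
  have ht1 : (r : ℝ) * β / (2 * m) < 1 := by
    rw [div_lt_one (by positivity)]
    nlinarith
  rw [kthSmallest_comp_of_antitone hr hrm antitone_two_mul_one_sub_Phi,
    PhiInv_one_sub_le_iff (by positivity) ht1,
    show 2 * ((r : ℝ) * β / (2 * m)) = r * β / m by field_simp]

theorem threshold_iff_bh_pvalue_general (m : ℕ) (β : ℝ)
    (hβ : 0 < β) (hβ' : β < 2) (y : Fin m → ℝ) :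
    (∀ r ∈ Finset.Icc 1 m,
      (PhiInv (1 - (r : ℝ) * β / (2 * m)) ≤ kthLargest m (fun i => |y i|) r ↔
        kthSmallest m (fun i => 2 * (1 - Phi |y i|)) r ≤ (r : ℝ) * β / m)) ∧
    ((Finset.Icc 1 m).filter fun r : ℕ =>
        PhiInv (1 - (r : ℝ) * β / (2 * m)) ≤ kthLargest m (fun i => |y i|) r) =
      ((Finset.Icc 1 m).filter fun r : ℕ =>
        kthSmallest m (fun i => 2 * (1 - Phi |y i|)) r ≤ (r : ℝ) * β / m) := by
  have key (r : ℕ) (hr : r ∈ Finset.Icc 1 m) :=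
    PhiInv_le_kthLargest_iff_kthSmallest_le (Finset.mem_Icc.mp hr).1 (Finset.mem_Icc.mp hr).2
      hβ hβ' fun i => |y i|
  exact ⟨key, Finset.filter_congr key⟩

theorem threshold_iff_bh_pvalue (m : ℕ) (hm : 1 ≤ m) (β : ℝ)
    (hβ : 0 < β) (hβ' : β < 2) (y : Fin m → ℝ) :
    (∀ r ∈ Finset.Icc 1 m,
      (PhiInv (1 - (r : ℝ) * β / (2 * m)) ≤ kthLargest m (fun i => |y i|) r ↔
        kthSmallest m (fun i => 2 * (1 - Phi |y i|)) r ≤ (r : ℝ) * β / m)) ∧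
    ((Finset.Icc 1 m).filter fun r : ℕ =>
        PhiInv (1 - (r : ℝ) * β / (2 * m)) ≤ kthLargest m (fun i => |y i|) r) =
      ((Finset.Icc 1 m).filter fun r : ℕ =>
        kthSmallest m (fun i => 2 * (1 - Phi |y i|)) r ≤ (r : ℝ) * β / m) :=
  threshold_iff_bh_pvalue_general m β hβ hβ' y
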